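/- arXiv:1704.07051 — 3 statements merged into one kernel-verified Lean document; each statement's English description precedes it below -/
import Mathlib

section
/- Let p > 1, a ≥ 1, and q = (p−1)a + 2, and fix K₁ > 0. Then there exists a constant c₀ > 0, depending only on p, a, K₁ (in particular independent of M and T₀), with the following property: for all M ≥ 1, T₀ > 0 and K₀ ≥ c₀ there is no function G ∈ C²([0,∞)) satisfying, for all t ≥ T₀, both G(t) ≥ K₀(t+M)^a and G''(t) ≥ K₁(t+M)^{−q} G(t)^p. Equivalently, if G ∈ C²([0,T)) satisfies these two inequalities for t ∈ [T₀,T) with K₀ ≥ c₀, then T < ∞. -/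
/-!
Once `G' ≥ 0` at some `T₁ ≥ T₀` (which the growth `G ≥ K₀ (t + M)^a` forces), `G` and `G'`
increase from `T₁` on, and on `[T₁, T₁ + L]` with `L = T₁ + M` the hypothesis gives the Riccati
inequality `G'' ≥ c G^p` with `c = K₁ (2L)^(-q)`. Integrating twice over `[x, x + 2h]`, where
`c G(x)^p h² = G(x)`, shows that `G` at least doubles over that step. The step lengths shrink
geometrically with ratio `2^(-(p-1)/2)`, so `G` would double infinitely often in a bounded interval
unless `c (1 - 2^(-(p-1)/2))² L² G(T₁)^(p-1) < 4`. Since `G(T₁) ≥ K₀ L^a` and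
`q = (p-1)a + 2`, the left side is at least `K₁ 2^(-q) (1 - 2^(-(p-1)/2))² K₀^(p-1)`, which is
`≥ 4` as soon as `K₀ ≥ c₀ := riccatiThreshold p a K₁`.
-/

open Set Real

theorem one_sub_two_rpow_neg_pos {γ : ℝ} (hγ : 0 < γ) : 0 < 1 - (2 : ℝ) ^ (-γ) :=
  sub_pos.2 (rpow_lt_one_of_one_lt_of_neg one_lt_two (neg_neg_of_pos hγ))

theorem add_mul_sq_le_of_le_deriv_deriv {f : ℝ → ℝ} {x h m : ℝ} (hh : 0 ≤ h) (hm : 0 ≤ m)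
    (hf : DifferentiableOn ℝ f (Icc x (x + 2 * h)))
    (hf' : DifferentiableOn ℝ (deriv f) (Icc x (x + 2 * h)))
    (hx : 0 ≤ deriv f x) (hm' : ∀ s ∈ Ioo x (x + 2 * h), m ≤ deriv (deriv f) s) :
    f x + m * h ^ 2 ≤ f (x + 2 * h) := by
  have hderiv : ∀ s ∈ Icc x (x + 2 * h), m * (s - x) ≤ deriv f s := fun s hs => by
    have := (convex_Icc _ _).mul_sub_le_image_sub_of_le_deriv hf'.continuousOn
      (hf'.mono interior_subset) (by rwa [interior_Icc]) x (left_mem_Icc.2 (by linarith)) s hs hs.1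
    linarith
  have hleft : Icc x (x + h) ⊆ Icc x (x + 2 * h) := Icc_subset_Icc le_rfl (by linarith)
  have hright : Icc (x + h) (x + 2 * h) ⊆ Icc x (x + 2 * h) := Icc_subset_Icc (by linarith) le_rfl
  have hfirst := (convex_Icc x (x + h)).mul_sub_le_image_sub_of_le_deriv
    (hf.mono hleft).continuousOn (hf.mono (interior_subset.trans hleft)) (C := 0)
    (fun s hs => by
      rw [interior_Icc] at hs
      exact (mul_nonneg hm (by linarith [hs.1])).trans (hderiv s (hleft (Ioo_subset_Icc_self hs))))
    x (left_mem_Icc.2 (by linarith)) (x + h) (right_mem_Icc.2 (by linarith)) (by linarith)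
  have hsecond := (convex_Icc (x + h) (x + 2 * h)).mul_sub_le_image_sub_of_le_deriv
    (hf.mono hright).continuousOn (hf.mono (interior_subset.trans hright)) (C := m * h)
    (fun s hs => by
      rw [interior_Icc] at hs
      exact (mul_le_mul_of_nonneg_left (by linarith [hs.1]) hm).trans
        (hderiv s (hright (Ioo_subset_Icc_self hs))))
    (x + h) (left_mem_Icc.2 (by linarith)) (x + 2 * h) (right_mem_Icc.2 (by linarith)) (by linarith)
  nlinarith

theorem not_bddAbove_image_of_two_mul_le {f : ℝ → ℝ} {a L κ γ : ℝ} (hκ : 0 ≤ κ) (hγ : 0 < γ)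
    (hfa : 0 < f a) (hL : κ * f a ^ (-γ) ≤ (1 - 2 ^ (-γ)) * L)
    (hstep : ∀ x ∈ Icc a (a + L), x + κ * f x ^ (-γ) ≤ a + L →
      2 * f x ≤ f (x + κ * f x ^ (-γ))) :
    ¬ BddAbove (f '' Icc a (a + L)) := by
  set r : ℝ := 2 ^ (-γ)
  have hr0 : 0 < r := rpow_pos_of_pos two_pos _
  have hr1 : 0 < 1 - r := one_sub_two_rpow_neg_pos hγ
  have hL0 : 0 ≤ L := nonneg_of_mul_nonneg_right
    ((by positivity : 0 ≤ κ * f a ^ (-γ)).trans hL) (by linarith)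
  have hiter : ∀ n : ℕ, ∃ x ∈ Icc a (a + (1 - r ^ n) * L), 2 ^ n * f a ≤ f x := by
    intro n
    induction n with
    | zero => exact ⟨a, by simp, by simp⟩
    | succ n ih =>
      obtain ⟨x, hx, hfx⟩ := ih
      have hrn : 0 ≤ r ^ n := pow_nonneg hr0.le n
      have hfx0 : 0 < f x := lt_of_lt_of_le (by positivity) hfx
      have hδ : κ * f x ^ (-γ) ≤ r ^ n * ((1 - r) * L) := calc
        κ * f x ^ (-γ) ≤ κ * (2 ^ n * f a) ^ (-γ) :=
          mul_le_mul_of_nonneg_left (rpow_le_rpow_of_nonpos (by positivity) hfx (by linarith)) hκ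
        _ = r ^ n * (κ * f a ^ (-γ)) := by
          rw [mul_rpow (by positivity) hfa.le, ← rpow_natCast_mul zero_le_two, mul_comm (n : ℝ),
            rpow_mul_natCast zero_le_two]
          ring
        _ ≤ r ^ n * ((1 - r) * L) := by gcongr
      have hδ0 : 0 ≤ κ * f x ^ (-γ) := by positivity
      have hrL : 0 ≤ r ^ (n + 1) * L := by positivity
      refine ⟨x + κ * f x ^ (-γ), ⟨by linarith [hx.1], by rw [pow_succ]; nlinarith [hx.2]⟩, ?_⟩
      calc 2 ^ (n + 1) * f a = 2 * (2 ^ n * f a) := by ring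
        _ ≤ 2 * f x := by gcongr
        _ ≤ f (x + κ * f x ^ (-γ)) :=
          hstep x ⟨hx.1, by nlinarith [hx.2]⟩ (by rw [pow_succ] at hrL; nlinarith [hx.2])
  rintro ⟨C, hC⟩
  obtain ⟨n, hn⟩ := pow_unbounded_of_one_lt (C / f a) one_lt_two
  obtain ⟨x, hx, hfx⟩ := hiter n
  have := hC ⟨x, ⟨hx.1, by nlinarith [hx.2, pow_nonneg hr0.le n]⟩, rfl⟩
  rw [div_lt_iff₀ hfa] at hn
  linarith

theorem rpow_neg_half_mul_rpow_sq {c v p : ℝ} (hc : 0 < c) (hv : 0 < v) :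
    (c ^ (-(1 / 2 : ℝ)) * v ^ (-((p - 1) / 2))) ^ 2 = (c * v ^ (p - 1))⁻¹ := by
  have hc' : -(1 / 2 : ℝ) * (2 : ℕ) = -1 := by norm_num
  have hv' : -((p - 1) / 2) * (2 : ℕ) = -(p - 1) := by push_cast; ring
  rw [mul_pow, ← rpow_mul_natCast hc.le, ← rpow_mul_natCast hv.le, hc', hv', rpow_neg_one,
    rpow_neg hv.le, mul_inv]

theorem riccati_add_mul_sq_le {f : ℝ → ℝ} {a b c p : ℝ} (hc : 0 < c) (hp : 0 ≤ p)
    (hf : DifferentiableOn ℝ f (Icc a b)) (hf' : DifferentiableOn ℝ (deriv f) (Icc a b))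
    (hpos : ∀ t ∈ Icc a b, 0 < f t) (hfa : 0 ≤ deriv f a)
    (hriccati : ∀ t ∈ Ioo a b, c * f t ^ p ≤ deriv (deriv f) t)
    {x h : ℝ} (hx : a ≤ x) (hh : 0 ≤ h) (hxb : x + 2 * h ≤ b) :
    f x + c * f x ^ p * h ^ 2 ≤ f (x + 2 * h) := by
  have hab : a ≤ b := by linarith
  have hf'mono : MonotoneOn (deriv f) (Icc a b) := by
    refine monotoneOn_of_deriv_nonneg (convex_Icc a b) hf'.continuousOn
      (hf'.mono interior_subset) fun t ht => ?_
    rw [interior_Icc] at ht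
    exact (mul_pos hc (rpow_pos_of_pos (hpos t (Ioo_subset_Icc_self ht)) p)).le.trans
      (hriccati t ht)
  have hf'nonneg : ∀ t ∈ Icc a b, 0 ≤ deriv f t := fun t ht =>
    hfa.trans (hf'mono (left_mem_Icc.2 hab) ht ht.1)
  have hfmono : MonotoneOn f (Icc a b) :=
    monotoneOn_of_deriv_nonneg (convex_Icc a b) hf.continuousOn (hf.mono interior_subset)
      fun t ht => hf'nonneg t (interior_subset ht)
  have hsub : Icc x (x + 2 * h) ⊆ Icc a b := Icc_subset_Icc hx hxb
  have hx' : x ∈ Icc a b := hsub (left_mem_Icc.2 (by linarith))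
  refine add_mul_sq_le_of_le_deriv_deriv hh (by have := hpos x hx'; positivity) (hf.mono hsub)
    (hf'.mono hsub) (hf'nonneg x hx') fun s hs => ?_
  have hs' : s ∈ Ioo a b := ⟨hx.trans_lt hs.1, hs.2.trans_le hxb⟩
  calc c * f x ^ p ≤ c * f s ^ p := by
        gcongr
        · exact (hpos x hx').le
        · exact hfmono hx' (Ioo_subset_Icc_self hs') hs.1.le
    _ ≤ deriv (deriv f) s := hriccati s hs'

theorem riccati_two_mul_le {f : ℝ → ℝ} {a b c p : ℝ} (hc : 0 < c) (hp : 0 ≤ p)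
    (hf : DifferentiableOn ℝ f (Icc a b)) (hf' : DifferentiableOn ℝ (deriv f) (Icc a b))
    (hpos : ∀ t ∈ Icc a b, 0 < f t) (hfa : 0 ≤ deriv f a)
    (hriccati : ∀ t ∈ Ioo a b, c * f t ^ p ≤ deriv (deriv f) t)
    {x : ℝ} (hx : x ∈ Icc a b)
    (hxb : x + 2 * c ^ (-(1 / 2 : ℝ)) * f x ^ (-((p - 1) / 2)) ≤ b) :
    2 * f x ≤ f (x + 2 * c ^ (-(1 / 2 : ℝ)) * f x ^ (-((p - 1) / 2))) := by
  have hfx := hpos x hx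
  have hstep := riccati_add_mul_sq_le hc hp hf hf' hpos hfa hriccati hx.1
    (h := c ^ (-(1 / 2 : ℝ)) * f x ^ (-((p - 1) / 2))) (by positivity) (by rwa [← mul_assoc])
  have hcancel : c * f x ^ p * (c * f x ^ (p - 1))⁻¹ = f x := by
    rw [rpow_sub_one hfx.ne']
    field_simp
  rw [rpow_neg_half_mul_rpow_sq hc hfx, hcancel, ← mul_assoc] at hstep
  linarith

theorem riccati_lifespan_lt {f : ℝ → ℝ} {a L c p : ℝ} (hc : 0 < c) (hp : 1 < p) (hL : 0 ≤ L)
    (hf : DifferentiableOn ℝ f (Icc a (a + L)))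
    (hf' : DifferentiableOn ℝ (deriv f) (Icc a (a + L)))
    (hpos : ∀ t ∈ Icc a (a + L), 0 < f t) (hfa : 0 ≤ deriv f a)
    (hriccati : ∀ t ∈ Ioo a (a + L), c * f t ^ p ≤ deriv (deriv f) t) :
    c * (1 - 2 ^ (-((p - 1) / 2))) ^ 2 * L ^ 2 * f a ^ (p - 1) < 4 := by
  by_contra! h
  have hfa0 := hpos a (left_mem_Icc.2 (by linarith))
  have hr := one_sub_two_rpow_neg_pos (by linarith : 0 < (p - 1) / 2)
  refine not_bddAbove_image_of_two_mul_le (by positivity) (by linarith) hfa0 ?_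
    (fun x hx hxb => riccati_two_mul_le hc (by linarith) hf hf' hpos hfa hriccati hx hxb)
    (isCompact_Icc.bddAbove_image hf.continuousOn)
  have hrL : 0 ≤ (1 - 2 ^ (-((p - 1) / 2))) * L := mul_nonneg hr.le hL
  rw [mul_assoc, ← pow_le_pow_iff_left₀ (by positivity) hrL two_ne_zero, mul_pow,
    rpow_neg_half_mul_rpow_sq hc hfa0, mul_pow, ← div_eq_mul_inv, div_le_iff₀ (by positivity)]
  linarith

noncomputable def riccatiThreshold (p a K₁ : ℝ) : ℝ :=
  (4 * 2 ^ ((p - 1) * a + 2) / (K₁ * (1 - 2 ^ (-((p - 1) / 2))) ^ 2)) ^ (1 / (p - 1))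

theorem riccatiThreshold_pos {p a K₁ : ℝ} (hp : 1 < p) (hK₁ : 0 < K₁) :
    0 < riccatiThreshold p a K₁ := by
  have := one_sub_two_rpow_neg_pos (by linarith : 0 < (p - 1) / 2)
  unfold riccatiThreshold
  positivity

theorem four_le_of_riccatiThreshold_le {p a K₁ K₀ L v : ℝ} (hp : 1 < p) (hK₁ : 0 < K₁)
    (hK₀ : riccatiThreshold p a K₁ ≤ K₀) (hL : 0 < L) (hv : K₀ * L ^ a ≤ v) :
    4 ≤ K₁ * (2 * L) ^ (-((p - 1) * a + 2)) * (1 - 2 ^ (-((p - 1) / 2))) ^ 2 * L ^ 2 *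
      v ^ (p - 1) := by
  have hK₀pos : 0 < K₀ := (riccatiThreshold_pos hp hK₁).trans_le hK₀
  set q := (p - 1) * a + 2
  set r : ℝ := 2 ^ (-((p - 1) / 2))
  have hr : 0 < 1 - r := one_sub_two_rpow_neg_pos (by linarith)
  set X := 4 * 2 ^ q / (K₁ * (1 - r) ^ 2)
  have hX : 0 < X := div_pos (by positivity) (mul_pos hK₁ (pow_pos hr 2))
  have hXK₀ : X ≤ K₀ ^ (p - 1) := by
    have := rpow_le_rpow (riccatiThreshold_pos hp hK₁).le hK₀ (by linarith : 0 ≤ p - 1)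
    rwa [riccatiThreshold, ← rpow_mul hX.le, one_div_mul_cancel (by linarith), rpow_one] at this
  have hK₀v : K₀ ^ (p - 1) * L ^ (a * (p - 1)) ≤ v ^ (p - 1) := by
    have := rpow_le_rpow (by positivity) hv (by linarith : 0 ≤ p - 1)
    rwa [mul_rpow hK₀pos.le (by positivity), ← rpow_mul hL.le] at this
  have hpowL : L ^ (-q) * L ^ 2 * L ^ (a * (p - 1)) = 1 := by
    have hexp : -q + (2 : ℕ) + a * (p - 1) = 0 := by
      simp only [q]
      push_cast
      ring
    rw [← rpow_natCast, ← rpow_add hL, ← rpow_add hL, hexp, rpow_zero]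
  calc 4 = K₁ * 2 ^ (-q) * (1 - r) ^ 2 * X := by
        rw [rpow_neg zero_le_two]
        simp only [X]
        field_simp
    _ ≤ K₁ * 2 ^ (-q) * (1 - r) ^ 2 * K₀ ^ (p - 1) := by gcongr
    _ = K₁ * 2 ^ (-q) * (1 - r) ^ 2 * K₀ ^ (p - 1) * (L ^ (-q) * L ^ 2 * L ^ (a * (p - 1))) := by
        rw [hpowL, mul_one]
    _ = K₁ * (2 * L) ^ (-q) * (1 - r) ^ 2 * L ^ 2 * (K₀ ^ (p - 1) * L ^ (a * (p - 1))) := by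
        rw [mul_rpow zero_le_two hL.le]
        ring
    _ ≤ K₁ * (2 * L) ^ (-q) * (1 - r) ^ 2 * L ^ 2 * v ^ (p - 1) := by gcongr

theorem exists_le_deriv_nonneg_of_mul_rpow_le {G : ℝ → ℝ} {K₀ M T₀ a : ℝ} (hK₀ : 0 < K₀)
    (ha : 1 ≤ a) (hT₀M : 1 ≤ T₀ + M) (hG : DifferentiableOn ℝ G (Ici T₀))
    (hlow : ∀ t, T₀ ≤ t → K₀ * (t + M) ^ a ≤ G t) :
    ∃ T₁, T₀ ≤ T₁ ∧ 0 ≤ deriv G T₁ := by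
  have hT₀M' : 0 < T₀ + M := by linarith
  have hGT₀ : 0 < G T₀ := lt_of_lt_of_le (by positivity) (hlow T₀ le_rfl)
  set T := T₀ + G T₀ / K₀
  have hT : T₀ < T := lt_add_of_pos_right _ (div_pos hGT₀ hK₀)
  have hgrow : G T₀ < G T := calc
    G T₀ = K₀ * (G T₀ / K₀) := by field_simp
    _ < K₀ * (T + M) := by gcongr; linarith
    _ ≤ K₀ * (T + M) ^ a := by gcongr; exact self_le_rpow_of_one_le (by linarith) ha
    _ ≤ G T := hlow T hT.le
  obtain ⟨c, hc, hslope⟩ := exists_deriv_eq_slope G hT (hG.mono Icc_subset_Ici_self).continuousOn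
    (hG.mono (Ioo_subset_Icc_self.trans Icc_subset_Ici_self))
  exact ⟨c, hc.1.le, hslope ▸ (div_pos (by linarith) (by linarith)).le⟩

/-- Riccati-type blowup lemma (Lemma 2.1): for `p > 1`, `a ≥ 1`, `q = (p-1)a + 2` and a
fixed `K₁ > 0`, there is `c₀ > 0` (independent of `M` and `T₀`) such that for all `M ≥ 1`,
`T₀ > 0` and `K₀ ≥ c₀` there is no `G ∈ C²([0,∞))` with `G(t) ≥ K₀(t+M)^a` and
`G''(t) ≥ K₁(t+M)^{-q} G(t)^p` for all `t ≥ T₀`. -/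
theorem stmt2 (p a K₁ : ℝ) (hp : 1 < p) (ha : 1 ≤ a) (hK₁ : 0 < K₁) :
    ∃ c₀ > (0 : ℝ), ∀ M T₀ K₀ : ℝ, 1 ≤ M → 0 < T₀ → c₀ ≤ K₀ →
      ¬ ∃ G : ℝ → ℝ, ContDiffOn ℝ 2 G (Set.Ici 0) ∧
        ∀ t : ℝ, T₀ ≤ t →
          K₀ * (t + M) ^ a ≤ G t ∧
          K₁ * (t + M) ^ (-((p - 1) * a + 2)) * G t ^ p ≤ deriv (deriv G) t := by
  refine ⟨riccatiThreshold p a K₁, riccatiThreshold_pos hp hK₁, ?_⟩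
  rintro M T₀ K₀ hM hT₀ hK₀ ⟨G, hG, hGbound⟩
  have hK₀pos : 0 < K₀ := (riccatiThreshold_pos hp hK₁).trans_le hK₀
  have hGpos : ∀ t, T₀ ≤ t → 0 < G t := fun t ht =>
    lt_of_lt_of_le (mul_pos hK₀pos (rpow_pos_of_pos (by linarith) a)) (hGbound t ht).1
  have hG' : ContDiffOn ℝ 2 G (Ioi 0) := hG.mono Ioi_subset_Ici_self
  have hG₁ : DifferentiableOn ℝ G (Ioi 0) := hG'.differentiableOn (by norm_num)
  have hG₂ : DifferentiableOn ℝ (deriv G) (Ioi 0) :=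
    (hG'.deriv_of_isOpen (m := 1) isOpen_Ioi (by norm_num)).differentiableOn (by norm_num)
  obtain ⟨T₁, hT₁, hG'T₁⟩ := exists_le_deriv_nonneg_of_mul_rpow_le hK₀pos ha (by linarith)
    (hG₁.mono fun t ht => hT₀.trans_le ht) fun t ht => (hGbound t ht).1
  set L := T₁ + M
  have hL : 0 < L := by linarith
  have hsub : Icc T₁ (T₁ + L) ⊆ Ioi 0 := fun t ht => hT₀.trans_le (hT₁.trans ht.1)
  have hlifespan := riccati_lifespan_lt (c := K₁ * (2 * L) ^ (-((p - 1) * a + 2))) (by positivity)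
    hp hL.le (hG₁.mono hsub) (hG₂.mono hsub) (fun t ht => hGpos t (hT₁.trans ht.1)) hG'T₁
    fun t ht => by
      have hdecay : (2 * L) ^ (-((p - 1) * a + 2)) ≤ (t + M) ^ (-((p - 1) * a + 2)) :=
        rpow_le_rpow_of_nonpos (by linarith [ht.1]) (by linarith [ht.2]) (by nlinarith)
      have := hGpos t (hT₁.trans ht.1.le)
      exact (by gcongr : K₁ * (2 * L) ^ (-((p - 1) * a + 2)) * G t ^ p ≤ _).trans
        (hGbound t (hT₁.trans ht.1.le)).2
  exact hlifespan.not_ge (four_le_of_riccatiThreshold_le hp hK₁ hK₀ hL (hGbound T₁ hT₁).1)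
end

section
/- Let A > 0 and define, for f ∈ L¹([0,A]) and 0 ≤ ρ < A, Tf(ρ) = (A−ρ)^{−1/2} ∫_ρ^A f(r) (r−ρ)^{−1/2} dr. Then T is of weak type (1,1) uniformly in A: there exists an absolute constant C > 0, independent of A, such that for every f ∈ L¹([0,A]) and every α > 0, the Lebesgue measure of {ρ ∈ [0,A] : |Tf(ρ)| > α} is at most C ‖f‖_{L¹([0,A])} / α. -/
/-!
Write `Tf(ρ) = (A - ρ)^{-1/2} h(ρ)`, where `|h| ≤ W|f|` for the one-sided half-integral
`W F(ρ) = ∫_{r > ρ} F(r) (r - ρ)^{-1/2} dr`. Let `L = ‖f‖₁`. The points with `α (A - ρ) < L` form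
an interval of length `L / α`; at the others `(A - ρ)^{-1/2} ≤ (α / L)^{1/2}`, so `|Tf(ρ)| > α`
forces `W|f|(ρ) > (α L)^{1/2}`.

`W` maps `L¹` to weak `L²`: `|{W F > t}| ≤ 8 ‖F‖₁² / t²`. Split the kernel at `δ`; the far part is
at most `δ^{-1/2} ‖F‖₁` everywhere, and by Tonelli the near part has `L¹` norm `2 √δ ‖F‖₁`.
With `√δ = 2 ‖F‖₁ / t` the far part is at most `t / 2`, and Chebyshev's inequality on the near
part gives the bound. Taking `t = (α L)^{1/2}` yields the constant `C = 1 + 8`.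
-/

open MeasureTheory Set
open scoped ENNReal

noncomputable def rpowNegHalf (x : ℝ) : ℝ≥0∞ := ENNReal.ofReal (x ^ (-(1 : ℝ) / 2))

/-- The Weyl fractional integral of order `1/2`, without the normalising factor `1/Γ(1/2)`. -/
noncomputable def weylHalfIntegral (F : ℝ → ℝ≥0∞) (ρ : ℝ) : ℝ≥0∞ :=
  ∫⁻ r in Ioi ρ, F r * rpowNegHalf (r - ρ)

lemma measurable_rpowNegHalf : Measurable rpowNegHalf :=
  ENNReal.measurable_ofReal.comp (measurable_id.pow_const _)

lemma rpowNegHalf_le_of_le {δ x : ℝ} (hδ : 0 < δ) (hx : δ ≤ x) :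
    rpowNegHalf x ≤ rpowNegHalf δ :=
  ENNReal.ofReal_le_ofReal (Real.rpow_le_rpow_of_nonpos hδ hx (by norm_num))

lemma setLIntegral_Ioo_rpowNegHalf {δ : ℝ} (hδ : 0 ≤ δ) :
    ∫⁻ x in Ioo 0 δ, rpowNegHalf x = ENNReal.ofReal (2 * √δ) := by
  have hint : IntegrableOn (fun x : ℝ ↦ x ^ (-(1 : ℝ) / 2)) (Ioo 0 δ) :=
    (intervalIntegrable_iff_integrableOn_Ioo_of_le hδ).1
      (intervalIntegral.intervalIntegrable_rpow' (by norm_num))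
  unfold rpowNegHalf
  rw [← ofReal_integral_eq_lintegral_ofReal hint
    ((ae_restrict_mem measurableSet_Ioo).mono fun x hx ↦ Real.rpow_nonneg hx.1.le _),
    ← integral_Ioc_eq_integral_Ioo, ← intervalIntegral.integral_of_le hδ,
    integral_rpow (Or.inl (by norm_num)), Real.sqrt_eq_rpow]
  congr 1
  norm_num
  ring

lemma rpowNegHalf_sq {s : ℝ} (hs : 0 ≤ s) : rpowNegHalf (s ^ 2) = ENNReal.ofReal s⁻¹ := by
  rw [rpowNegHalf, neg_div, Real.rpow_neg (sq_nonneg s), ← Real.sqrt_eq_rpow, Real.sqrt_sq hs]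

lemma rpowNegHalf_le_add_indicator {δ x : ℝ} (hδ : 0 < δ) (hx : 0 < x) :
    rpowNegHalf x ≤ rpowNegHalf δ + (Ioo 0 δ).indicator rpowNegHalf x := by
  rcases lt_or_ge x δ with hnear | hfar
  · rw [indicator_of_mem (show x ∈ Ioo 0 δ from ⟨hx, hnear⟩)]
    exact le_add_self
  · exact (rpowNegHalf_le_of_le hδ hfar).trans le_self_add

noncomputable def truncWeylHalfIntegral (δ : ℝ) (F : ℝ → ℝ≥0∞) (ρ : ℝ) : ℝ≥0∞ :=
  ∫⁻ r, F r * (Ioo 0 δ).indicator rpowNegHalf (r - ρ)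

lemma weylHalfIntegral_congr_ae {F G : ℝ → ℝ≥0∞} (h : F =ᵐ[volume] G) :
    weylHalfIntegral F = weylHalfIntegral G := by
  ext ρ
  exact lintegral_congr_ae (ae_restrict_of_ae (h.mono fun r hr ↦ by simp only [hr]))

lemma measurable_indicator_Ioo_rpowNegHalf (δ : ℝ) :
    Measurable ((Ioo 0 δ).indicator rpowNegHalf) :=
  measurable_rpowNegHalf.indicator measurableSet_Ioo

section

variable {F : ℝ → ℝ≥0∞}

lemma measurable_uncurry_truncWeylHalfIntegral_integrand (hF : Measurable F) (δ : ℝ) :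
    Measurable (Function.uncurry fun ρ r ↦ F r * (Ioo 0 δ).indicator rpowNegHalf (r - ρ)) :=
  (hF.comp measurable_snd).mul
    ((measurable_indicator_Ioo_rpowNegHalf δ).comp (measurable_snd.sub measurable_fst))

lemma weylHalfIntegral_le_mul_add_trunc (hF : Measurable F) {δ : ℝ} (hδ : 0 < δ) (ρ : ℝ) :
    weylHalfIntegral F ρ ≤ (∫⁻ r, F r) * rpowNegHalf δ + truncWeylHalfIntegral δ F ρ := by
  have hnear : Measurable fun r ↦ F r * (Ioo 0 δ).indicator rpowNegHalf (r - ρ) :=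
    (measurable_uncurry_truncWeylHalfIntegral_integrand hF δ).comp measurable_prodMk_left
  calc weylHalfIntegral F ρ
      ≤ ∫⁻ r in Ioi ρ, (F r * rpowNegHalf δ + F r * (Ioo 0 δ).indicator rpowNegHalf (r - ρ)) := by
        refine setLIntegral_mono ((hF.mul_const _).add hnear) fun r hr ↦ ?_
        rw [← mul_add]
        exact mul_le_mul_right (rpowNegHalf_le_add_indicator hδ (sub_pos.2 hr)) _
    _ ≤ _ := by
        rw [lintegral_add_left (hF.mul_const _), lintegral_mul_const _ hF]
        exact add_le_add (mul_le_mul_left (setLIntegral_le_lintegral _ _) _)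
          (setLIntegral_le_lintegral _ _)

lemma measurable_truncWeylHalfIntegral (hF : Measurable F) (δ : ℝ) :
    Measurable (truncWeylHalfIntegral δ F) :=
  (measurable_uncurry_truncWeylHalfIntegral_integrand hF δ).lintegral_prod_right'

lemma lintegral_truncWeylHalfIntegral (hF : Measurable F) {δ : ℝ} (hδ : 0 ≤ δ) :
    ∫⁻ ρ, truncWeylHalfIntegral δ F ρ = (∫⁻ r, F r) * ENNReal.ofReal (2 * √δ) := by
  unfold truncWeylHalfIntegral
  rw [lintegral_lintegral_swap
      (measurable_uncurry_truncWeylHalfIntegral_integrand hF δ).aemeasurable,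
    ← lintegral_mul_const _ hF]
  refine lintegral_congr fun r ↦ ?_
  rw [lintegral_const_mul (f := fun x ↦ (Ioo 0 δ).indicator rpowNegHalf (r - x)) _
      ((measurable_indicator_Ioo_rpowNegHalf δ).comp (measurable_const.sub measurable_id)),
    lintegral_sub_left_eq_self (fun x ↦ (Ioo 0 δ).indicator rpowNegHalf x),
    lintegral_indicator measurableSet_Ioo, setLIntegral_Ioo_rpowNegHalf hδ]

lemma volume_lt_weylHalfIntegral_le_of_measurable (hF : Measurable F) {τ n : ℝ} (hτ : 0 < τ)
    (hn : 0 < n) (hN : ∫⁻ r, F r = ENNReal.ofReal n) :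
    volume {ρ | ENNReal.ofReal τ < weylHalfIntegral F ρ} ≤ ENNReal.ofReal (8 * n ^ 2 / τ ^ 2) := by
  -- `s` is chosen so that the far part of the kernel contributes `τ / 2`
  set s := 2 * n / τ with hs_def
  have hs : 0 < s := by positivity
  have hfar : (∫⁻ r, F r) * rpowNegHalf (s ^ 2) = ENNReal.ofReal (τ / 2) := by
    rw [hN, rpowNegHalf_sq hs.le, ← ENNReal.ofReal_mul hn.le]
    congr 1
    rw [hs_def]
    field_simp
  have hsub : {ρ | ENNReal.ofReal τ < weylHalfIntegral F ρ}
      ⊆ {ρ | ENNReal.ofReal (τ / 2) ≤ truncWeylHalfIntegral (s ^ 2) F ρ} := by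
    intro ρ (hρ : ENNReal.ofReal τ < weylHalfIntegral F ρ)
    show ENNReal.ofReal (τ / 2) ≤ truncWeylHalfIntegral (s ^ 2) F ρ
    by_contra! hnear
    have hle := weylHalfIntegral_le_mul_add_trunc hF (by positivity : 0 < s ^ 2) ρ
    rw [hfar] at hle
    refine hρ.not_ge (hle.trans ?_)
    calc ENNReal.ofReal (τ / 2) + truncWeylHalfIntegral (s ^ 2) F ρ
        ≤ ENNReal.ofReal (τ / 2) + ENNReal.ofReal (τ / 2) := add_le_add_right hnear.le _
      _ = ENNReal.ofReal τ := by rw [← ENNReal.ofReal_add (by positivity) (by positivity)]; ring_nf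
  calc volume {ρ | ENNReal.ofReal τ < weylHalfIntegral F ρ}
      ≤ volume {ρ | ENNReal.ofReal (τ / 2) ≤ truncWeylHalfIntegral (s ^ 2) F ρ} := measure_mono hsub
    _ ≤ (∫⁻ ρ, truncWeylHalfIntegral (s ^ 2) F ρ) / ENNReal.ofReal (τ / 2) :=
        meas_ge_le_lintegral_div (measurable_truncWeylHalfIntegral hF _).aemeasurable
          (by simpa using hτ) ENNReal.ofReal_ne_top
    _ = ENNReal.ofReal (8 * n ^ 2 / τ ^ 2) := by
        rw [lintegral_truncWeylHalfIntegral hF (sq_nonneg s), hN, Real.sqrt_sq hs.le,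
          ← ENNReal.ofReal_mul hn.le, ← ENNReal.ofReal_div_of_pos (by positivity)]
        congr 1
        rw [hs_def]
        field_simp
        ring

theorem volume_lt_weylHalfIntegral_le (hF : AEMeasurable F) (t : ℝ≥0∞) :
    volume {ρ | t < weylHalfIntegral F ρ} ≤ 8 * (∫⁻ r, F r) ^ 2 / t ^ 2 := by
  rw [weylHalfIntegral_congr_ae hF.ae_eq_mk, lintegral_congr_ae hF.ae_eq_mk]
  have hG := hF.measurable_mk
  set G := hF.mk F
  rcases eq_or_ne (∫⁻ r, G r) 0 with hN0 | hN0
  · have hzero : weylHalfIntegral G = 0 := by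
      rw [weylHalfIntegral_congr_ae ((lintegral_eq_zero_iff hG).1 hN0)]
      ext ρ
      simp [weylHalfIntegral]
    simp [hzero]
  rcases eq_or_ne t ⊤ with rfl | ht_top
  · simp
  by_cases hdeg : ∫⁻ r, G r = ⊤ ∨ t = 0
  · refine le_of_le_of_eq le_top (ENNReal.div_eq_top.2 ?_).symm
    rcases hdeg with h | h <;> simp [h, hN0, ht_top]
  obtain ⟨hN_top, ht0⟩ := not_or.1 hdeg
  have hτ := ENNReal.toReal_pos ht0 ht_top
  have key := volume_lt_weylHalfIntegral_le_of_measurable hG hτ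
    (ENNReal.toReal_pos hN0 hN_top) (ENNReal.ofReal_toReal hN_top).symm
  rwa [ENNReal.ofReal_toReal ht_top, ENNReal.ofReal_div_of_pos (by positivity),
    ENNReal.ofReal_mul (by norm_num), ENNReal.ofReal_pow ENNReal.toReal_nonneg,
    ENNReal.ofReal_pow ENNReal.toReal_nonneg, ENNReal.ofReal_toReal hN_top,
    ENNReal.ofReal_toReal ht_top, ENNReal.ofReal_ofNat] at key

lemma enorm_setIntegral_Ioo_le_weylHalfIntegral (f : ℝ → ℝ) {s : Set ℝ} {ρ A : ℝ}
    (h : Ioo ρ A ⊆ s) :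
    ‖∫ r in Ioo ρ A, f r * (r - ρ) ^ (-(1 : ℝ) / 2)‖ₑ
      ≤ weylHalfIntegral (s.indicator fun r ↦ ‖f r‖ₑ) ρ :=
  calc ‖∫ r in Ioo ρ A, f r * (r - ρ) ^ (-(1 : ℝ) / 2)‖ₑ
      ≤ ∫⁻ r in Ioo ρ A, ‖f r * (r - ρ) ^ (-(1 : ℝ) / 2)‖ₑ := enorm_integral_le_lintegral_enorm _
    _ = ∫⁻ r in Ioo ρ A, s.indicator (fun r ↦ ‖f r‖ₑ) r * rpowNegHalf (r - ρ) :=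
        setLIntegral_congr_fun measurableSet_Ioo fun r hr ↦ by
          rw [enorm_mul, indicator_of_mem (h hr),
            Real.enorm_of_nonneg (Real.rpow_nonneg (sub_pos.2 hr.1).le _), rpowNegHalf]
    _ ≤ _ := lintegral_mono_set Ioo_subset_Ioi_self

lemma ofReal_sqrt_mul_lt_of_lt_abs_rpow_neg_half_mul {a b x I : ℝ} {W : ℝ≥0∞} (ha : 0 ≤ a)
    (hx : 0 ≤ x) (hb : b ≤ a * x) (hI : ‖I‖ₑ ≤ W) (h : a < |x ^ (-(1 : ℝ) / 2) * I|) :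
    ENNReal.ofReal √(a * b) < W := by
  by_contra! hW
  have hx' : 0 ≤ x ^ (-(1 : ℝ) / 2) := Real.rpow_nonneg hx _
  have hsqrt : x ^ (-(1 : ℝ) / 2) * √(a * b) ≤ a := by
    rcases hx.eq_or_lt with rfl | hx
    · rw [Real.zero_rpow (by norm_num), zero_mul]
      exact ha
    rw [neg_div, Real.rpow_neg hx.le, ← Real.sqrt_eq_rpow, inv_mul_le_iff₀ (Real.sqrt_pos.2 hx)]
    calc √(a * b) ≤ √(a ^ 2 * x) := Real.sqrt_le_sqrt (by nlinarith)
      _ = √x * a := by rw [Real.sqrt_mul (sq_nonneg a), Real.sqrt_sq ha, mul_comm]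
  refine h.not_ge ((ENNReal.ofReal_le_ofReal_iff ha).1 ?_)
  calc ENNReal.ofReal |x ^ (-(1 : ℝ) / 2) * I|
      = ENNReal.ofReal (x ^ (-(1 : ℝ) / 2)) * ‖I‖ₑ := by
        rw [abs_mul, abs_of_nonneg hx', ENNReal.ofReal_mul hx', ← Real.enorm_eq_ofReal_abs]
    _ ≤ ENNReal.ofReal (x ^ (-(1 : ℝ) / 2)) * ENNReal.ofReal √(a * b) := by gcongr; exact hI.trans hW
    _ ≤ ENNReal.ofReal a := by rw [← ENNReal.ofReal_mul hx']; exact ENNReal.ofReal_le_ofReal hsqrt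

lemma eight_mul_ofReal_sq_div_ofReal_sqrt_sq {L α : ℝ} (hL : 0 ≤ L) (hα : 0 < α) :
    8 * ENNReal.ofReal L ^ 2 / ENNReal.ofReal √(α * L) ^ 2 = ENNReal.ofReal (8 * L / α) := by
  rcases hL.eq_or_lt with rfl | hL
  · simp
  rw [← ENNReal.ofReal_pow (Real.sqrt_nonneg _), Real.sq_sqrt (by positivity),
    ← ENNReal.ofReal_pow hL.le, ← ENNReal.ofReal_ofNat 8, ← ENNReal.ofReal_mul (by norm_num),
    ← ENNReal.ofReal_div_of_pos (by positivity)]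
  congr 1
  field_simp

/-- Weak type `(1,1)` bound, uniform in `A`, for the `n = 2` averaging operator
`Tf(ρ) = (A-ρ)^{-1/2} ∫_ρ^A f(r)(r-ρ)^{-1/2} dr`: there is an absolute constant `C > 0`
such that for every `A > 0`, `f ∈ L¹([0,A])` and `α > 0`,
`|{ρ ∈ [0,A] : |Tf(ρ)| > α}| ≤ C ‖f‖_{L¹([0,A])} / α`. -/
theorem stmt6 :
    ∃ C > (0 : ℝ), ∀ A : ℝ, 0 < A → ∀ f : ℝ → ℝ, IntegrableOn f (Set.Icc 0 A) volume →
      ∀ α : ℝ, 0 < α →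
        volume {ρ ∈ Set.Icc (0 : ℝ) A |
            α < |(A - ρ) ^ (-(1 : ℝ) / 2) * ∫ r in Set.Ioo ρ A, f r * (r - ρ) ^ (-(1 : ℝ) / 2)|}
          ≤ ENNReal.ofReal (C * (∫ r in Set.Icc (0 : ℝ) A, |f r|) / α) := by
  refine ⟨9, by norm_num, fun A _ f hf α hα ↦ ?_⟩
  set L := ∫ r in Icc (0 : ℝ) A, |f r|
  have hL : 0 ≤ L := integral_nonneg fun r ↦ abs_nonneg _
  set F := (Icc 0 A).indicator fun r ↦ ‖f r‖ₑ
  have hF : AEMeasurable F := (aemeasurable_indicator_iff measurableSet_Icc).2 hf.aemeasurable.enorm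
  have hN : ∫⁻ r, F r = ENNReal.ofReal L := by
    rw [lintegral_indicator measurableSet_Icc, ← ofReal_integral_norm_eq_lintegral_enorm hf]
    rfl
  have hsub : {ρ ∈ Icc (0 : ℝ) A |
        α < |(A - ρ) ^ (-(1 : ℝ) / 2) * ∫ r in Ioo ρ A, f r * (r - ρ) ^ (-(1 : ℝ) / 2)|}
      ⊆ Icc (A - L / α) A ∪ {ρ | ENNReal.ofReal √(α * L) < weylHalfIntegral F ρ} := by
    rintro ρ ⟨hρ, hT⟩
    rcases lt_or_ge (α * (A - ρ)) L with hnear | hfar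
    · refine Or.inl ⟨?_, hρ.2⟩
      rw [sub_le_comm, le_div_iff₀ hα]
      linarith
    · exact Or.inr (ofReal_sqrt_mul_lt_of_lt_abs_rpow_neg_half_mul hα.le (sub_nonneg.2 hρ.2) hfar
        (enorm_setIntegral_Ioo_le_weylHalfIntegral f fun r hr ↦
          ⟨hρ.1.trans hr.1.le, hr.2.le⟩) hT)
  calc volume _
      ≤ volume (Icc (A - L / α) A) + volume {ρ | ENNReal.ofReal √(α * L) < weylHalfIntegral F ρ} :=
        (measure_mono hsub).trans (measure_union_le _ _)
    _ ≤ ENNReal.ofReal (L / α) + ENNReal.ofReal (8 * L / α) := by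
        gcongr
        · rw [Real.volume_Icc, sub_sub_cancel]
        · rw [← eight_mul_ofReal_sq_div_ofReal_sqrt_sq hL hα, ← hN]
          exact volume_lt_weylHalfIntegral_le hF _
    _ = ENNReal.ofReal (9 * L / α) := by
        rw [← ENNReal.ofReal_add (by positivity) (by positivity)]
        ring_nf
end
end

section
/- Let 1 < p < ∞. There exists a constant C_p > 0, independent of A, such that for every A > 0 and every f ∈ L^p([0,A]), the function Tf(ρ) = (A−ρ)^{−1/2} ∫_ρ^A f(r) (r−ρ)^{−1/2} dr (0 ≤ ρ < A) satisfies ‖Tf‖_{L^p([0,A])} ≤ C_p ‖f‖_{L^p([0,A])}. -/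
/-!
The substitution `r = ρ + (A - ρ) t` turns the operator into
`Tf(ρ) = ∫₀¹ f(ρ + (A - ρ) t) t^{-1/2} dt`, an average of the contracted copies
`ρ ↦ f(ρ + (A - ρ) t)` of `f`, whose `L^p(0, A)` norms are at most `(1 - t)^{-1/p} ‖f‖_p`
whatever `A` is. Hölder's inequality in `t`, with the singularity `t^{-1/2}` shared between the
two factors, followed by Tonelli, bounds `‖Tf‖_p^p` by `‖f‖_p^p` times a product of two Beta
integrals, which are finite because `p > 1`.
-/

open MeasureTheory Set
open scoped ENNReal

noncomputable def abelMean (A : ℝ) (f : ℝ → ℝ) (ρ : ℝ) : ℝ :=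
  (A - ρ) ^ (-(1 : ℝ) / 2) * ∫ r in Ioo ρ A, f r * (r - ρ) ^ (-(1 : ℝ) / 2)

theorem abelMean_eq_intervalIntegral {A ρ : ℝ} (hρ : ρ < A) (f : ℝ → ℝ) :
    abelMean A f ρ = ∫ t in (0 : ℝ)..1, f ((A - ρ) * t + ρ) * t ^ (-(1 : ℝ) / 2) := by
  have hA : 0 < A - ρ := sub_pos.2 hρ
  have hsub := intervalIntegral.integral_comp_mul_add
    (fun r => f r * (r - ρ) ^ (-(1 : ℝ) / 2)) hA.ne' ρ (a := 0) (b := 1)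
  simp only [mul_zero, zero_add, mul_one, sub_add_cancel, add_sub_cancel_right,
    smul_eq_mul] at hsub
  rw [abelMean, ← integral_Ioc_eq_integral_Ioo, ← intervalIntegral.integral_of_le hρ.le,
    ← mul_inv_cancel_left₀ hA.ne' (∫ r in ρ..A, _), ← hsub, ← mul_assoc,
    ← intervalIntegral.integral_const_mul]
  refine intervalIntegral.integral_congr fun t ht => ?_
  rw [uIcc_of_le zero_le_one] at ht
  have hcancel : (A - ρ) ^ (-(1 : ℝ) / 2) * (A - ρ) * (A - ρ) ^ (-(1 : ℝ) / 2) = 1 := by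
    rw [mul_right_comm, ← Real.rpow_add hA, ← Real.rpow_add_one hA.ne']; norm_num
  rw [Real.mul_rpow hA.le ht.1]
  linear_combination (f ((A - ρ) * t + ρ) * t ^ (-(1 : ℝ) / 2)) * hcancel

theorem enorm_abelMean_le {A ρ : ℝ} (hρ : ρ ≤ A) (f : ℝ → ℝ) :
    ‖abelMean A f ρ‖ₑ ≤
      ∫⁻ t in Ioo 0 1, ‖f ((A - ρ) * t + ρ)‖ₑ * ENNReal.ofReal (t ^ (-(1 : ℝ) / 2)) := by
  rcases hρ.lt_or_eq with hρ | rfl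
  · rw [abelMean_eq_intervalIntegral hρ, intervalIntegral.integral_of_le zero_le_one,
      integral_Ioc_eq_integral_Ioo]
    refine (enorm_integral_le_lintegral_enorm _).trans_eq
      (setLIntegral_congr_fun measurableSet_Ioo fun t ht => ?_)
    rw [enorm_mul, Real.enorm_of_nonneg (Real.rpow_nonneg ht.1.le _)]
  · simp [abelMean]

theorem abelMean_congr {a A : ℝ} {f g : ℝ → ℝ} (h : f =ᵐ[volume.restrict (Icc a A)] g) :
    EqOn (abelMean A f) (abelMean A g) (Icc a A) := by
  intro ρ hρ
  have hsub : Ioo ρ A ⊆ Icc a A := fun r hr => ⟨hρ.1.trans hr.1.le, hr.2.le⟩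
  have hfg : f =ᵐ[volume.restrict (Ioo ρ A)] g := ae_restrict_of_ae_restrict_of_subset hsub h
  rw [abelMean, abelMean, integral_congr_ae (hfg.mono fun r hr => by rw [hr])]

theorem lintegral_Icc_comp_affine_le {a b t : ℝ} (ht : t ∈ Ico (0 : ℝ) 1) (F : ℝ → ℝ≥0∞) :
    ∫⁻ ρ in Icc a b, F ((b - ρ) * t + ρ) ≤ ENNReal.ofReal (1 - t)⁻¹ * ∫⁻ x in Icc a b, F x := by
  have h1 : 0 < 1 - t := sub_pos.2 ht.2
  have hderiv (ρ : ℝ) : HasDerivAt (fun ρ => (b - ρ) * t + ρ) (1 - t) ρ := by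
    have h := ((hasDerivAt_id ρ).const_mul (1 - t)).add_const (b * t)
    rwa [mul_one, show (fun x => (1 - t) * id x + b * t) = fun ρ => (b - ρ) * t + ρ by
      ext; simp only [id]; ring] at h
  have hinj : InjOn (fun ρ => (b - ρ) * t + ρ) (Icc a b) := fun x _ y _ hxy => by
    have : (1 - t) * (x - y) = 0 := by linear_combination hxy
    simpa [sub_eq_zero, h1.ne'] using this
  have himage : (fun ρ => (b - ρ) * t + ρ) '' Icc a b ⊆ Icc a b := by
    rintro _ ⟨ρ, hρ, rfl⟩
    constructor <;> nlinarith [hρ.1, hρ.2, ht.1, ht.2]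
  rw [ENNReal.ofReal_inv_of_pos h1, ← ENNReal.mul_le_iff_le_inv (ENNReal.ofReal_pos.2 h1).ne'
    ENNReal.ofReal_ne_top, ← lintegral_const_mul' _ _ ENNReal.ofReal_ne_top, ← abs_of_pos h1,
    ← lintegral_image_eq_lintegral_abs_deriv_mul measurableSet_Icc
      (fun ρ _ => (hderiv ρ).hasDerivWithinAt) hinj]
  exact lintegral_mono_set himage

theorem lintegral_lintegral_Icc_comp_affine_rpow_le {p : ℝ} (hp : 0 < p) (q a A : ℝ)
    (F : ℝ → ℝ≥0∞) :
    ∫⁻ t in Ioo 0 1, ∫⁻ ρ in Icc a A,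
        (ENNReal.ofReal (t ^ (-(1 / (2 * p))) * (1 - t) ^ (1 / (2 * q))) * F ((A - ρ) * t + ρ)) ^ p
      ≤ (∫⁻ t in Ioo 0 1, ENNReal.ofReal (t ^ (-(1 : ℝ) / 2) * (1 - t) ^ (p / (2 * q) - 1))) *
        ∫⁻ x in Icc a A, F x ^ p := by
  rw [← lintegral_mul_const _ (by fun_prop)]
  refine setLIntegral_mono' measurableSet_Ioo fun t ht => ?_
  have h0 := ht.1
  have h1 : 0 < 1 - t := sub_pos.2 ht.2
  simp_rw [ENNReal.mul_rpow_of_nonneg _ _ hp.le]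
  rw [lintegral_const_mul' _ _ (ENNReal.rpow_ne_top_of_nonneg hp.le ENNReal.ofReal_ne_top)]
  calc _ ≤ ENNReal.ofReal (t ^ (-(1 / (2 * p))) * (1 - t) ^ (1 / (2 * q))) ^ p *
          (ENNReal.ofReal (1 - t)⁻¹ * ∫⁻ x in Icc a A, F x ^ p) := by
        gcongr
        exact lintegral_Icc_comp_affine_le ⟨h0.le, ht.2⟩ _
    _ = _ := by
        rw [← mul_assoc, ENNReal.ofReal_rpow_of_nonneg (by positivity) hp.le,
          ← ENNReal.ofReal_mul (by positivity), Real.mul_rpow (by positivity) (by positivity),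
          ← Real.rpow_mul h0.le, ← Real.rpow_mul h1.le, Real.rpow_sub_one h1.ne',
          show -(1 / (2 * p)) * p = -(1 : ℝ) / 2 by field_simp,
          show 1 / (2 * q) * p = p / (2 * q) by ring]
        ring_nf

theorem lintegral_rpow_lintegral_mul_le {X T : Type*} [MeasurableSpace X] [MeasurableSpace T]
    {μ : Measure X} {ν : Measure T} [SFinite μ] [SFinite ν] {p q : ℝ} (hpq : p.HolderConjugate q)
    {w : T → ℝ≥0∞} (hw : AEMeasurable w ν) {H : X → T → ℝ≥0∞}
    (hH : Measurable (Function.uncurry H)) :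
    ∫⁻ x, (∫⁻ t, w t * H x t ∂ν) ^ p ∂μ ≤
      (∫⁻ t, w t ^ q ∂ν) ^ (p / q) * ∫⁻ t, ∫⁻ x, H x t ^ p ∂μ ∂ν := by
  have hHp : Measurable (Function.uncurry fun x t => H x t ^ p) := hH.pow_const p
  have holder (x : X) :
      (∫⁻ t, w t * H x t ∂ν) ^ p ≤ (∫⁻ t, w t ^ q ∂ν) ^ (p / q) * ∫⁻ t, H x t ^ p ∂ν := by
    have h := ENNReal.lintegral_mul_le_Lp_mul_Lq ν hpq
      (hH.comp (measurable_prodMk_left (x := x))).aemeasurable hw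
    simp only [Pi.mul_apply, Function.comp_apply, Function.uncurry_apply_pair] at h
    calc (∫⁻ t, w t * H x t ∂ν) ^ p
        ≤ ((∫⁻ t, H x t ^ p ∂ν) ^ (1 / p) * (∫⁻ t, w t ^ q ∂ν) ^ (1 / q)) ^ p := by
          simp_rw [mul_comm (w _)]
          exact ENNReal.rpow_le_rpow h hpq.nonneg
      _ = (∫⁻ t, w t ^ q ∂ν) ^ (p / q) * ∫⁻ t, H x t ^ p ∂ν := by
          rw [ENNReal.mul_rpow_of_nonneg _ _ hpq.nonneg, ← ENNReal.rpow_mul, ← ENNReal.rpow_mul,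
            one_div_mul_cancel hpq.ne_zero, ENNReal.rpow_one, one_div_mul_eq_div, mul_comm]
  have hmeas : Measurable fun x => ∫⁻ t, H x t ^ p ∂ν := hHp.lintegral_prod_right'
  calc ∫⁻ x, (∫⁻ t, w t * H x t ∂ν) ^ p ∂μ
      ≤ ∫⁻ x, (∫⁻ t, w t ^ q ∂ν) ^ (p / q) * ∫⁻ t, H x t ^ p ∂ν ∂μ := lintegral_mono holder
    _ = (∫⁻ t, w t ^ q ∂ν) ^ (p / q) * ∫⁻ t, ∫⁻ x, H x t ^ p ∂μ ∂ν := by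
      rw [lintegral_const_mul _ hmeas, lintegral_lintegral_swap hHp.aemeasurable]

theorem intervalIntegrable_rpow_mul_one_sub_rpow {a b : ℝ} (ha : -1 < a) (hb : -1 < b) :
    IntervalIntegrable (fun t : ℝ => t ^ a * (1 - t) ^ b) volume 0 1 := by
  have hleft : IntervalIntegrable (fun t : ℝ => t ^ a * (1 - t) ^ b) volume 0 (1 / 2) := by
    refine (intervalIntegral.intervalIntegrable_rpow' ha).mul_continuousOn ?_
    refine ContinuousOn.rpow_const (continuousOn_const.sub continuousOn_id) fun t ht => ?_
    rw [uIcc_of_le (by norm_num)] at ht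
    exact Or.inl (by linarith [ht.2])
  have hright : IntervalIntegrable (fun t : ℝ => t ^ a * (1 - t) ^ b) volume (1 / 2) 1 := by
    have h := (intervalIntegral.intervalIntegrable_rpow' hb (a := 1 / 2) (b := 0)).comp_sub_left 1
    rw [show (1 : ℝ) - 1 / 2 = 1 / 2 by norm_num, sub_zero] at h
    refine h.continuousOn_mul (ContinuousOn.rpow_const continuousOn_id fun t ht => ?_)
    rw [uIcc_of_le (by norm_num)] at ht
    exact Or.inl (by linarith [ht.1])
  exact hleft.trans hright

theorem lintegral_Ioo_rpow_mul_one_sub_rpow_ne_top {a b : ℝ} (ha : -1 < a) (hb : -1 < b) :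
    ∫⁻ t in Ioo 0 1, ENNReal.ofReal (t ^ a * (1 - t) ^ b) ≠ ∞ :=
  ((intervalIntegrable_rpow_mul_one_sub_rpow ha hb).1.mono_set
    Ioo_subset_Ioc_self).lintegral_lt_top.ne

noncomputable def abelConst (p q : ℝ) : ℝ≥0∞ :=
  (∫⁻ t in Ioo 0 1, ENNReal.ofReal (t ^ (-(1 : ℝ) / 2) * (1 - t) ^ (-(1 : ℝ) / 2))) ^ (p / q) *
    ∫⁻ t in Ioo 0 1, ENNReal.ofReal (t ^ (-(1 : ℝ) / 2) * (1 - t) ^ (p / (2 * q) - 1))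

theorem abelConst_ne_top {p q : ℝ} (hpq : p.HolderConjugate q) : abelConst p q ≠ ∞ := by
  have hp := hpq.pos
  have hq := hpq.symm.pos
  refine ENNReal.mul_ne_top (ENNReal.rpow_ne_top_of_nonneg (by positivity)
    (lintegral_Ioo_rpow_mul_one_sub_rpow_ne_top (by norm_num) (by norm_num)))
    (lintegral_Ioo_rpow_mul_one_sub_rpow_ne_top (by norm_num) ?_)
  have : 0 < p / (2 * q) := by positivity
  linarith

theorem lintegral_enorm_abelMean_rpow_le {p q : ℝ} (hpq : p.HolderConjugate q) (a A : ℝ)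
    {f : ℝ → ℝ} (hf : Measurable f) :
    ∫⁻ ρ in Icc a A, ‖abelMean A f ρ‖ₑ ^ p ≤ abelConst p q * ∫⁻ x in Icc a A, ‖f x‖ₑ ^ p := by
  have hp := hpq.pos
  have hq := hpq.symm.pos
  -- `t ^ (-1/2)` splits as `w t` times the weight in `H`, chosen so that both `w ^ q` and
  -- `weight ^ p / (1 - t)` (the Jacobian of the contraction) are Beta densities
  set w : ℝ → ℝ≥0∞ := fun t => ENNReal.ofReal ((t * (1 - t)) ^ (-(1 / (2 * q))))
  set H : ℝ → ℝ → ℝ≥0∞ := fun ρ t =>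
    ENNReal.ofReal (t ^ (-(1 / (2 * p))) * (1 - t) ^ (1 / (2 * q))) * ‖f ((A - ρ) * t + ρ)‖ₑ
  have hpointwise : ∀ ρ ∈ Icc a A, ‖abelMean A f ρ‖ₑ ≤ ∫⁻ t in Ioo 0 1, w t * H ρ t := by
    intro ρ hρ
    refine (enorm_abelMean_le hρ.2 f).trans_eq
      (setLIntegral_congr_fun measurableSet_Ioo fun t ht => ?_)
    have h0 := ht.1
    have h1 : 0 < 1 - t := sub_pos.2 ht.2
    simp only [w, H]
    rw [← mul_assoc, ← ENNReal.ofReal_mul (by positivity), mul_comm]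
    congr 2
    rw [Real.mul_rpow h0.le h1.le, mul_mul_mul_comm, ← Real.rpow_add h0, ← Real.rpow_add h1,
      neg_add_cancel, Real.rpow_zero, mul_one]
    congr 1
    linear_combination (1 / 2 : ℝ) * hpq.inv_add_inv_eq_one
  have hw : ∫⁻ t in Ioo 0 1, w t ^ q =
      ∫⁻ t in Ioo 0 1, ENNReal.ofReal (t ^ (-(1 : ℝ) / 2) * (1 - t) ^ (-(1 : ℝ) / 2)) := by
    refine setLIntegral_congr_fun measurableSet_Ioo fun t ht => ?_
    have h0 := ht.1
    have h1 : 0 < 1 - t := sub_pos.2 ht.2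
    simp only [w]
    rw [ENNReal.ofReal_rpow_of_nonneg (by positivity) hq.le, ← Real.rpow_mul (by positivity),
      Real.mul_rpow h0.le h1.le]
    congr 3 <;> field_simp
  calc ∫⁻ ρ in Icc a A, ‖abelMean A f ρ‖ₑ ^ p
      ≤ ∫⁻ ρ in Icc a A, (∫⁻ t in Ioo 0 1, w t * H ρ t) ^ p :=
        setLIntegral_mono' measurableSet_Icc fun ρ hρ =>
          ENNReal.rpow_le_rpow (hpointwise ρ hρ) hp.le
    _ ≤ (∫⁻ t in Ioo 0 1, w t ^ q) ^ (p / q) * ∫⁻ t in Ioo 0 1, ∫⁻ ρ in Icc a A, H ρ t ^ p :=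
        lintegral_rpow_lintegral_mul_le hpq (by fun_prop) (by fun_prop)
    _ ≤ abelConst p q * ∫⁻ x in Icc a A, ‖f x‖ₑ ^ p := by
        rw [hw, abelConst, mul_assoc]
        gcongr
        exact lintegral_lintegral_Icc_comp_affine_rpow_le hp q a A _

theorem eLpNorm_le_mul_of_lintegral_rpow_le {α E F : Type*} [MeasurableSpace α] {μ : Measure α}
    [NormedAddCommGroup E] [NormedAddCommGroup F] {p : ℝ} (hp : 0 < p) {f : α → E} {g : α → F}
    {K : ℝ≥0∞} (h : ∫⁻ x, ‖g x‖ₑ ^ p ∂μ ≤ K ^ p * ∫⁻ x, ‖f x‖ₑ ^ p ∂μ) :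
    eLpNorm g (ENNReal.ofReal p) μ ≤ K * eLpNorm f (ENNReal.ofReal p) μ := by
  have hp' : ENNReal.ofReal p ≠ 0 := ENNReal.ofReal_ne_zero_iff.2 hp
  rw [eLpNorm_eq_lintegral_rpow_enorm_toReal hp' ENNReal.ofReal_ne_top,
    eLpNorm_eq_lintegral_rpow_enorm_toReal hp' ENNReal.ofReal_ne_top, ENNReal.toReal_ofReal hp.le]
  calc (∫⁻ x, ‖g x‖ₑ ^ p ∂μ) ^ (1 / p)
      ≤ (K ^ p * ∫⁻ x, ‖f x‖ₑ ^ p ∂μ) ^ (1 / p) := ENNReal.rpow_le_rpow h (by positivity)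
    _ = K * (∫⁻ x, ‖f x‖ₑ ^ p ∂μ) ^ (1 / p) := by
      rw [ENNReal.mul_rpow_of_nonneg _ _ (by positivity), ← ENNReal.rpow_mul,
        mul_one_div_cancel hp.ne', ENNReal.rpow_one]

theorem eLpNorm_abelMean_le {p q : ℝ} (hpq : p.HolderConjugate q) (a A : ℝ) {f : ℝ → ℝ}
    (hf : AEStronglyMeasurable f (volume.restrict (Icc a A))) :
    eLpNorm (abelMean A f) (ENNReal.ofReal p) (volume.restrict (Icc a A)) ≤
      abelConst p q ^ p⁻¹ * eLpNorm f (ENNReal.ofReal p) (volume.restrict (Icc a A)) := by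
  have hTf : abelMean A f =ᵐ[volume.restrict (Icc a A)] abelMean A (hf.mk f) :=
    ae_restrict_of_forall_mem measurableSet_Icc (abelMean_congr hf.ae_eq_mk)
  rw [eLpNorm_congr_ae hTf, eLpNorm_congr_ae hf.ae_eq_mk]
  refine eLpNorm_le_mul_of_lintegral_rpow_le hpq.pos ?_
  rw [← ENNReal.rpow_mul, inv_mul_cancel₀ hpq.ne_zero, ENNReal.rpow_one]
  exact lintegral_enorm_abelMean_rpow_le hpq a A hf.stronglyMeasurable_mk.measurable

/-- `L^p` boundedness, uniform in `A`, of the `n = 2` averaging operator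
`Tf(ρ) = (A-ρ)^{-1/2} ∫_ρ^A f(r)(r-ρ)^{-1/2} dr` on `[0,A]`, for `1 < p < ∞`. -/
theorem stmt7 (p : ℝ) (hp : 1 < p) :
    ∃ C > (0 : ℝ), ∀ A : ℝ, 0 < A → ∀ f : ℝ → ℝ,
      MemLp f (ENNReal.ofReal p) (volume.restrict (Set.Icc 0 A)) →
      eLpNorm
        (fun ρ : ℝ => (A - ρ) ^ (-(1 : ℝ) / 2) *
          ∫ r in Set.Ioo ρ A, f r * (r - ρ) ^ (-(1 : ℝ) / 2))
        (ENNReal.ofReal p) (volume.restrict (Set.Icc 0 A))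
        ≤ ENNReal.ofReal C * eLpNorm f (ENNReal.ofReal p) (volume.restrict (Set.Icc 0 A)) := by
  have hpq := Real.HolderConjugate.conjExponent hp
  set K := abelConst p p.conjExponent ^ p⁻¹
  have hK : K ≠ ∞ := ENNReal.rpow_ne_top_of_nonneg (inv_nonneg.2 hpq.nonneg) (abelConst_ne_top hpq)
  refine ⟨K.toReal + 1, by positivity, fun A _ f hf => ?_⟩
  calc eLpNorm (abelMean A f) (ENNReal.ofReal p) (volume.restrict (Icc 0 A))
      ≤ K * eLpNorm f (ENNReal.ofReal p) (volume.restrict (Icc 0 A)) :=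
        eLpNorm_abelMean_le hpq 0 A hf.aestronglyMeasurable
    _ ≤ ENNReal.ofReal (K.toReal + 1) *
          eLpNorm f (ENNReal.ofReal p) (volume.restrict (Icc 0 A)) := by
        gcongr
        exact (ENNReal.le_ofReal_iff_toReal_le hK (by positivity)).2 (by linarith)
end
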